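/- Let 𝔸 = (A, ≤, →, Σ) be an implicative algebra with |A| < κ for a strongly inaccessible cardinal κ, and let W, ∈_W, =_W and the interpretation ‖·‖ be as defined below. Then W validates every instance of the ∈-Induction scheme: for every formula in context φ[w₁,…,wₙ,x], the interpretation of ∀w₁…∀wₙ (∀x(∀y(y ∈ x → φ[y/x]) → φ) → ∀x φ) belongs to Σ. -/

import Mathlib

universe u

/-- An implicative algebra `𝔸 = (A, ≤, →, Σ)`:  a complete lattice `(A, ≤)` together with an
implication `imp` which is antitone in its first argument, monotone in its second argument and
turns infima in the second argument into infima, and a separator `Sig ⊆ A` which is upward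
closed, closed under modus ponens and contains the combinators `K` and `S`. -/
structure ImplicativeAlgebra (A : Type u) [CompleteLattice A] where
  imp : A → A → A
  imp_antitone : ∀ ⦃a a' b : A⦄, a ≤ a' → imp a' b ≤ imp a b
  imp_monotone : ∀ ⦃a b b' : A⦄, b ≤ b' → imp a b ≤ imp a b'
  imp_sInf : ∀ (a : A) (S : Set A), imp a (sInf S) = ⨅ b ∈ S, imp a b
  Sig : Set A
  Sig_upward : ∀ ⦃a b : A⦄, a ∈ Sig → a ≤ b → b ∈ Sig
  Sig_mp : ∀ ⦃a b : A⦄, imp a b ∈ Sig → a ∈ Sig → b ∈ Sig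
  Sig_K : (⨅ a : A, ⨅ b : A, imp a (imp b a)) ∈ Sig
  Sig_S : (⨅ a : A, ⨅ b : A, ⨅ c : A,
      imp (imp a (imp b c)) (imp (imp a b) (imp a c))) ∈ Sig

namespace ImplicativeAlgebra

variable {A : Type u} [CompleteLattice A]

/-- `a × b := ⨅ x, ((a → (b → x)) → x)`. -/
def times (IA : ImplicativeAlgebra A) (a b : A) : A :=
  ⨅ x : A, IA.imp (IA.imp a (IA.imp b x)) x

/-- `a + b := ⨅ x, ((a → x) → ((b → x) → x))`. -/
def plus (IA : ImplicativeAlgebra A) (a b : A) : A :=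
  ⨅ x : A, IA.imp (IA.imp a x) (IA.imp (IA.imp b x) x)

/-- `∃⃗_{i} f i := ⨅ x, ((⨅ i, (f i → x)) → x)`.  (`∀⃗` is just `⨅`.) -/
def aex (IA : ImplicativeAlgebra A) {ι : Sort*} (f : ι → A) : A :=
  ⨅ x : A, IA.imp (⨅ i, IA.imp (f i) x) x

/-- `φ ⊢_{Σ[I]} ψ` iff `⨅ i, (φ i → ψ i) ∈ Σ`. -/
def SigLe (IA : ImplicativeAlgebra A) {ι : Sort*} (f g : ι → A) : Prop :=
  (⨅ i, IA.imp (f i) (g i)) ∈ IA.Sig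

/-- `φ ≡_{Σ[I]} ψ` iff `φ ⊢_{Σ[I]} ψ` and `ψ ⊢_{Σ[I]} φ`. -/
def SigEquiv (IA : ImplicativeAlgebra A) {ι : Sort*} (f g : ι → A) : Prop :=
  IA.SigLe f g ∧ IA.SigLe g f

end ImplicativeAlgebra

/-- Pre-elements of the cumulative hierarchy of partial functions valued in `A`:
an element is an `A`-labelled family of previously constructed elements, i.e. a partial
function (presented by a family indexed by its domain) from earlier elements to `A`. -/
inductive PreW (A : Type u) : Type (u + 1)
  | mk (ι : Type u) (fam : ι → PreW A) (val : ι → A)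

namespace PreW

variable {A : Type u}

/-- The (index type of the) domain of a partial function. -/
def dom : PreW A → Type u
  | ⟨ι, _, _⟩ => ι

/-- The family of elements of the domain. -/
def fam : (w : PreW A) → w.dom → PreW A
  | ⟨_, f, _⟩ => f

/-- The values in `A` of the partial function. -/
def val : (w : PreW A) → w.dom → A
  | ⟨_, _, v⟩ => v

/-- `w` is hereditarily of size `< κ`:  this carves out exactly the elements of the stage
`W_κ` of the hierarchy (for `κ` inaccessible). -/
def HSmall (κ : Cardinal.{u}) : PreW A → Prop
  | ⟨ι, f, _⟩ => Cardinal.mk ι < κ ∧ ∀ i, HSmall κ (f i)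

theorem HSmall.fam {κ : Cardinal.{u}} :
    ∀ {w : PreW A}, w.HSmall κ → ∀ i : w.dom, (w.fam i).HSmall κ
  | ⟨_, _, _⟩, h, i => h.2 i

/-- The rank of an element of the hierarchy. -/
noncomputable def rank : PreW A → Ordinal.{u}
  | ⟨_, f, _⟩ => ⨆ i, Order.succ (rank (f i))

theorem rank_lt_mk {ι : Type u} (f : ι → PreW A) (v : ι → A) (i : ι) :
    (f i).rank < (PreW.mk ι f v).rank := by
  have h : Order.succ (f i).rank ≤ ⨆ j, Order.succ (f j).rank := Ordinal.le_iSup _ i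
  have : (f i).rank < ⨆ j, Order.succ (f j).rank :=
    lt_of_lt_of_le (Order.lt_succ _) h
  simpa [rank] using this

end PreW

namespace ImplicativeAlgebra

variable {A : Type u} [CompleteLattice A]

/-- `α =_W β`, defined by recursion on rank:
`α =_W β := (α ⊆_W β) × (β ⊆_W α)` where
`α ⊆_W β := ∀⃗_{t ∈ dom α} (α t → (fam α t ∈_W β))` and
`γ ∈_W β := ∃⃗_{s ∈ dom β} (β s × (fam β s =_W γ))`. -/
noncomputable def eqW (IA : ImplicativeAlgebra A) : PreW A → PreW A → A
  | ⟨ι₁, f₁, v₁⟩, ⟨ι₂, f₂, v₂⟩ =>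
    IA.times
      (⨅ t : ι₁, IA.imp (v₁ t)
        (IA.aex fun s : ι₂ => IA.times (v₂ s) (IA.eqW (f₂ s) (f₁ t))))
      (⨅ t : ι₂, IA.imp (v₂ t)
        (IA.aex fun s : ι₁ => IA.times (v₁ s) (IA.eqW (f₁ s) (f₂ t))))
termination_by α β => max α.rank β.rank
decreasing_by
  · exact max_lt (lt_of_lt_of_le (PreW.rank_lt_mk f₂ v₂ s) le_sup_right)
      (lt_of_lt_of_le (PreW.rank_lt_mk f₁ v₁ t) le_sup_left)
  · exact max_lt (lt_of_lt_of_le (PreW.rank_lt_mk f₁ v₁ s) le_sup_left)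
      (lt_of_lt_of_le (PreW.rank_lt_mk f₂ v₂ t) le_sup_right)

/-- `α ∈_W β := ∃⃗_{s ∈ dom β} (β s × (fam β s =_W α))`. -/
noncomputable def memW (IA : ImplicativeAlgebra A) (α β : PreW A) : A :=
  IA.aex fun s : β.dom => IA.times (β.val s) (IA.eqW (β.fam s) α)

/-- `α ⊆_W β := ∀⃗_{t ∈ dom α} (α t → (fam α t ∈_W β))`. -/
noncomputable def subW (IA : ImplicativeAlgebra A) (α β : PreW A) : A :=
  ⨅ t : α.dom, IA.imp (α.val t) (IA.memW (α.fam t) β)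

end ImplicativeAlgebra

/-- The stage `W = W_κ` of the hierarchy: all hereditarily `< κ`-sized elements. -/
def WSet (A : Type u) (κ : Cardinal.{u}) : Type (u + 1) :=
  {w : PreW A // w.HSmall κ}

/-- An element of the domain of `w ∈ W`, as an element of `W`. -/
def WSet.fam {A : Type u} {κ : Cardinal.{u}} (w : WSet A κ) (i : w.1.dom) : WSet A κ :=
  ⟨w.1.fam i, w.2.fam i⟩

/-- Formulas (in context of length `n`) of the first-order language of set theory, with
(de Bruijn-style) variables `Fin n`, binary predicates `∈` and `=`, connectives `⊥`, `∧`, `∨`,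
`→` and quantifiers `∃`, `∀` (binding the last variable of the enlarged context). -/
inductive SetFormula : ℕ → Type
  | bot {n : ℕ} : SetFormula n
  | mem {n : ℕ} (i j : Fin n) : SetFormula n
  | eq {n : ℕ} (i j : Fin n) : SetFormula n
  | and {n : ℕ} (φ ψ : SetFormula n) : SetFormula n
  | or {n : ℕ} (φ ψ : SetFormula n) : SetFormula n
  | imp {n : ℕ} (φ ψ : SetFormula n) : SetFormula n
  | ex {n : ℕ} (φ : SetFormula (n + 1)) : SetFormula n
  | all {n : ℕ} (φ : SetFormula (n + 1)) : SetFormula n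

namespace SetFormula

/-- Renaming of variables (since the only terms of the language of set theory are variables,
substitution is a special case). -/
def rename : {n m : ℕ} → (Fin n → Fin m) → SetFormula n → SetFormula m
  | _, _, _, .bot => .bot
  | _, _, f, .mem i j => .mem (f i) (f j)
  | _, _, f, .eq i j => .eq (f i) (f j)
  | _, _, f, .and φ ψ => .and (φ.rename f) (ψ.rename f)
  | _, _, f, .or φ ψ => .or (φ.rename f) (ψ.rename f)
  | _, _, f, .imp φ ψ => .imp (φ.rename f) (ψ.rename f)
  | _, _, f, .ex φ => .ex (φ.rename (Fin.snoc (Fin.castSucc ∘ f) (Fin.last _)))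
  | _, _, f, .all φ => .all (φ.rename (Fin.snoc (Fin.castSucc ∘ f) (Fin.last _)))

/-- Universal closure `∀x₁ … ∀xₙ φ` of a formula in context of length `n`. -/
def allClose : {n : ℕ} → SetFormula n → SetFormula 0
  | 0, φ => φ
  | _ + 1, φ => allClose (.all φ)

end SetFormula

namespace ImplicativeAlgebra

variable {A : Type u} [CompleteLattice A]

/-- The interpretation `‖φ[x₁,…,xₙ]‖ : Wⁿ → A` of a formula in context, by recursion on the
structure of `φ`:  atomic formulas are interpreted by `∈_W` and `=_W`, `∧` by `×`, `∨` by `+`,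
`→` by `→`, `∃` by `∃⃗` over `W` and `∀` by `∀⃗` (i.e. `⨅`) over `W`. -/
noncomputable def interp (IA : ImplicativeAlgebra A) (κ : Cardinal.{u}) :
    {n : ℕ} → SetFormula n → (Fin n → WSet A κ) → A
  | _, .bot, _ => ⊥
  | _, .mem i j, v => IA.memW (v i).1 (v j).1
  | _, .eq i j, v => IA.eqW (v i).1 (v j).1
  | _, .and φ ψ, v => IA.times (IA.interp κ φ v) (IA.interp κ ψ v)
  | _, .or φ ψ, v => IA.plus (IA.interp κ φ v) (IA.interp κ ψ v)
  | _, .imp φ ψ, v => IA.imp (IA.interp κ φ v) (IA.interp κ ψ v)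
  | _, .ex φ, v => IA.aex fun β : WSet A κ => IA.interp κ φ (Fin.snoc v β)
  | _, .all φ, v => ⨅ β : WSet A κ, IA.interp κ φ (Fin.snoc v β)

end ImplicativeAlgebra


/-!
Realizers are closed `S`/`K`-terms, read in `A` through the application
`a b := ⨅ {c | a ≤ (b → c)}`; closed terms land in `Σ`, which contains `K`, `S` and is closed
under application. Recursion on the rank of elements of `W` is realized by a fixed-point
combinator: recursion on the middle element realizes transitivity of `=_W`, and recursion
realizes its reflexivity. The main realizer shows, by recursion on `α`, that the premise of
`∈`-induction implies `∀ β, α =_W β → φ β`: from `γ ∈ β` and `β ⊆_W α` one gets a member `α t`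
of `α` with `α t =_W γ`, to which the recursive call applies, so no substitutivity of `=_W` in
`φ` is needed. Taking `β := α` and reflexivity gives `∀ α, φ α`. The realizer depends neither on
`φ` nor on the parameters, hence realizes the universal closure.
-/

theorem PreW.rank_fam_lt {A : Type u} (w : PreW A) (i : w.dom) : (w.fam i).rank < w.rank := by
  obtain ⟨ι, f, v⟩ := w
  exact rank_lt_mk f v i

namespace ImplicativeAlgebra

variable {A : Type u} [CompleteLattice A] (IA : ImplicativeAlgebra A)

def app (a b : A) : A := sInf {c | a ≤ IA.imp b c}

def K : A := ⨅ a : A, ⨅ b : A, IA.imp a (IA.imp b a)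

def S : A := ⨅ a : A, ⨅ b : A, ⨅ c : A,
  IA.imp (IA.imp a (IA.imp b c)) (IA.imp (IA.imp a b) (IA.imp a c))

variable {IA}

theorem app_le_iff {a b c : A} : IA.app a b ≤ c ↔ a ≤ IA.imp b c := by
  refine ⟨fun h => ?_, fun h => sInf_le h⟩
  have hle : a ≤ IA.imp b (IA.app a b) := by
    rw [app, IA.imp_sInf]
    exact le_iInf₂ fun _ hc => hc
  exact hle.trans (IA.imp_monotone h)

theorem le_imp_app {a b : A} : a ≤ IA.imp b (IA.app a b) := app_le_iff.1 le_rfl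

theorem app_le_of_le_imp {f x a b : A} (hf : f ≤ IA.imp a b) (hx : x ≤ a) : IA.app f x ≤ b :=
  app_le_iff.2 (hf.trans (IA.imp_antitone hx))

theorem app_mono {a a' b b' : A} (ha : a ≤ a') (hb : b ≤ b') : IA.app a b ≤ IA.app a' b' :=
  app_le_of_le_imp (ha.trans le_imp_app) hb

theorem app_mem {a b : A} (ha : a ∈ IA.Sig) (hb : b ∈ IA.Sig) : IA.app a b ∈ IA.Sig :=
  IA.Sig_mp (IA.Sig_upward ha le_imp_app) hb

theorem top_mem : (⊤ : A) ∈ IA.Sig := IA.Sig_upward IA.Sig_K le_top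

theorem K_le (a b : A) : IA.K ≤ IA.imp a (IA.imp b a) :=
  (iInf_le _ a).trans (iInf_le _ b)

theorem S_le (a b c : A) :
    IA.S ≤ IA.imp (IA.imp a (IA.imp b c)) (IA.imp (IA.imp a b) (IA.imp a c)) :=
  (iInf_le _ a).trans ((iInf_le _ b).trans (iInf_le _ c))

theorem app_app_K_le (a b : A) : IA.app (IA.app IA.K a) b ≤ a :=
  app_le_of_le_imp (app_le_of_le_imp (K_le a b) le_rfl) le_rfl

theorem app_app_app_S_le (a b c : A) :
    IA.app (IA.app (IA.app IA.S a) b) c ≤ IA.app (IA.app a c) (IA.app b c) := by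
  refine app_le_of_le_imp (app_le_of_le_imp (app_le_of_le_imp (S_le c (IA.app b c) _) ?_)
    le_imp_app) le_rfl
  exact le_imp_app.trans (IA.imp_monotone le_imp_app)

end ImplicativeAlgebra

inductive SKTerm
  | var (k : ℕ)
  | S
  | K
  | app (t u : SKTerm)

infixl:100 " ⬝ " => SKTerm.app

namespace SKTerm

def I : SKTerm := S ⬝ K ⬝ K

/-- Bracket abstraction of the variable `0`; the other variables are shifted down by one. -/
def lam : SKTerm → SKTerm
  | var 0 => I
  | var (k + 1) => K ⬝ var k
  | S => K ⬝ S
  | K => K ⬝ K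
  | t ⬝ u => S ⬝ lam t ⬝ lam u

/-- Turing's fixed-point combinator `(λ x y. y (x x y)) (λ x y. y (x x y))`. -/
def fix (t : SKTerm) : SKTerm :=
  lam (lam (var 0 ⬝ (var 1 ⬝ var 1 ⬝ var 0))) ⬝ lam (lam (var 0 ⬝ (var 1 ⬝ var 1 ⬝ var 0))) ⬝ t

/-- `λ u v k. k u v` -/
def pair (t u : SKTerm) : SKTerm := lam (lam (lam (var 0 ⬝ var 2 ⬝ var 1))) ⬝ t ⬝ u

def fst (t : SKTerm) : SKTerm := t ⬝ K

def snd (t : SKTerm) : SKTerm := t ⬝ (K ⬝ I)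

/-- `λ u k. k u` -/
def exIntro (t : SKTerm) : SKTerm := lam (lam (var 0 ⬝ var 1)) ⬝ t

/-- `λ g d₁ d₂ p. d₁ p (λ q. d₂ (fst q) (λ q'. exIntro (pair (fst q') (g (snd q') (snd q)))))`
-/
def subTrans : SKTerm :=
  lam (lam (lam (lam (var 2 ⬝ var 0 ⬝ lam (var 2 ⬝ fst (var 0) ⬝
    lam (exIntro (pair (fst (var 0)) (var 5 ⬝ snd (var 0) ⬝ snd (var 1)))))))))

/-- `fix (λ g e₁ e₂. pair (subTrans g (fst e₁) (fst e₂)) (subTrans g (snd e₂) (snd e₁)))` -/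
def eqTrans : SKTerm :=
  fix (lam (lam (lam (pair (subTrans ⬝ var 2 ⬝ fst (var 1) ⬝ fst (var 0))
    (subTrans ⬝ var 2 ⬝ snd (var 0) ⬝ snd (var 1))))))

/-- `fix (λ r. pair (λ p. exIntro (pair p r)) (λ p. exIntro (pair p r)))` -/
def eqRefl : SKTerm :=
  fix (lam (pair (lam (exIntro (pair (var 0) (var 1))))
    (lam (exIntro (pair (var 0) (var 1))))))

/-- `fix (λ g h e. h (λ m. m (λ p. snd e (fst p) (λ q. g h (eqTrans (snd q) (snd p))))))`
-/
def memIndAux : SKTerm :=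
  fix (lam (lam (lam (var 1 ⬝ lam (var 0 ⬝ lam (snd (var 2) ⬝ fst (var 0) ⬝
    lam (var 5 ⬝ var 4 ⬝ (eqTrans ⬝ snd (var 0) ⬝ snd (var 1)))))))))

def memInd : SKTerm := lam (memIndAux ⬝ var 0 ⬝ eqRefl)

end SKTerm

namespace ImplicativeAlgebra

open SKTerm

variable {A : Type u} [CompleteLattice A] (IA : ImplicativeAlgebra A)

/-- Variables outside the environment `l` denote `⊤`. -/
def eval (l : List A) : SKTerm → A
  | var k => l.getD k ⊤
  | .S => IA.S
  | .K => IA.K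
  | t ⬝ u => IA.app (eval l t) (eval l u)

variable {IA}

theorem eval_mem {l : List A} (hl : ∀ a ∈ l, a ∈ IA.Sig) : ∀ t, IA.eval l t ∈ IA.Sig
  | var k => by
    rw [eval, List.getD_eq_getElem?_getD]
    cases h : l[k]? with
    | none => exact top_mem
    | some a => exact hl a (List.mem_of_getElem? h)
  | .S => IA.Sig_S
  | .K => IA.Sig_K
  | t ⬝ u => app_mem (eval_mem hl t) (eval_mem hl u)

theorem app_eval_I_le (l : List A) (a : A) : IA.app (IA.eval l I) a ≤ a :=
  (app_app_app_S_le _ _ _).trans (app_app_K_le _ _)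

theorem app_eval_lam_le (l : List A) (a : A) :
    ∀ t, IA.app (IA.eval l (lam t)) a ≤ IA.eval (a :: l) t
  | var 0 => app_eval_I_le l a
  | var (_ + 1) => app_app_K_le _ _
  | .S => app_app_K_le _ _
  | .K => app_app_K_le _ _
  | t ⬝ u => (app_app_app_S_le _ _ _).trans
      (app_mono (app_eval_lam_le l a t) (app_eval_lam_le l a u))

theorem eval_lam_le_imp {l : List A} {t : SKTerm} {a b : A} (h : IA.eval (a :: l) t ≤ b) :
    IA.eval l (lam t) ≤ IA.imp a b :=
  app_le_iff.1 ((app_eval_lam_le l a t).trans h)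

theorem eval_app_le {l : List A} {t u : SKTerm} {a b : A} (ht : IA.eval l t ≤ IA.imp a b)
    (hu : IA.eval l u ≤ a) : IA.eval l (t ⬝ u) ≤ b :=
  app_le_of_le_imp ht hu

theorem eval_fix_le (l : List A) (t : SKTerm) :
    IA.eval l (fix t) ≤ IA.app (IA.eval l t) (IA.eval l (fix t)) :=
  (app_mono (app_eval_lam_le _ _ _) le_rfl).trans (app_eval_lam_le _ _ _)

theorem eval_fix_lam_le_iInf {ι : Sort*} {r : ι → ι → Prop} (hr : WellFounded r) {P : ι → A}
    {l : List A} {t : SKTerm}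
    (ht : ∀ i g, (∀ j, r j i → g ≤ P j) → IA.eval (g :: l) t ≤ P i) :
    IA.eval l (fix (lam t)) ≤ ⨅ i, P i :=
  le_iInf fun i => hr.induction (C := fun i => IA.eval l (fix (lam t)) ≤ P i) i fun i ih =>
    (eval_fix_le l _).trans ((app_eval_lam_le l _ t).trans (ht i _ ih))

theorem eval_pair_le {l : List A} {t u : SKTerm} {a b : A} (ht : IA.eval l t ≤ a)
    (hu : IA.eval l u ≤ b) : IA.eval l (pair t u) ≤ IA.times a b := by
  refine le_iInf fun x => ?_
  refine (app_mono (app_eval_lam_le _ _ _) le_rfl).trans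
    ((app_eval_lam_le _ _ _).trans (eval_lam_le_imp ?_))
  exact app_le_of_le_imp (app_le_of_le_imp le_rfl ht) hu

theorem eval_fst_le {l : List A} {t : SKTerm} {a b : A} (ht : IA.eval l t ≤ IA.times a b) :
    IA.eval l (fst t) ≤ a :=
  app_le_of_le_imp (ht.trans (iInf_le _ a)) (K_le a b)

theorem eval_snd_le {l : List A} {t : SKTerm} {a b : A} (ht : IA.eval l t ≤ IA.times a b) :
    IA.eval l (snd t) ≤ b :=
  app_le_of_le_imp (ht.trans (iInf_le _ b))
    (app_le_iff.1 ((app_app_K_le _ a).trans (app_le_iff.1 (app_eval_I_le l b))))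

theorem eval_exIntro_le {ι : Sort*} {f : ι → A} (i : ι) {l : List A} {t : SKTerm}
    (ht : IA.eval l t ≤ f i) : IA.eval l (exIntro t) ≤ IA.aex f := by
  refine le_iInf fun x => (app_eval_lam_le _ _ _).trans (eval_lam_le_imp ?_)
  exact app_le_of_le_imp (iInf_le _ i) ht

theorem eval_app_lam_le_of_le_aex {ι : Sort*} {f : ι → A} {l : List A} {t u : SKTerm} {b : A}
    (ht : IA.eval l t ≤ IA.aex f) (hu : ∀ i, IA.eval (f i :: l) u ≤ b) :
    IA.eval l (t ⬝ lam u) ≤ b :=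
  app_le_of_le_imp (ht.trans (iInf_le _ b)) (le_iInf fun i => eval_lam_le_imp (hu i))

theorem eqW_eq_times (a b : PreW A) :
    IA.eqW a b = IA.times (IA.subW a b) (IA.subW b a) := by
  obtain ⟨ι₁, f₁, v₁⟩ := a
  obtain ⟨ι₂, f₂, v₂⟩ := b
  rw [eqW]
  rfl

theorem eval_subTrans_le {l : List A} {a b c : PreW A} {g : A}
    (hg : ∀ x y s,
      g ≤ IA.imp (IA.eqW x (b.fam s)) (IA.imp (IA.eqW (b.fam s) y) (IA.eqW x y))) :
    IA.eval l subTrans ≤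
      IA.imp g (IA.imp (IA.subW a b) (IA.imp (IA.subW b c) (IA.subW a c))) := by
  refine eval_lam_le_imp (eval_lam_le_imp (eval_lam_le_imp
    (le_iInf fun t => eval_lam_le_imp ?_)))
  refine eval_app_lam_le_of_le_aex (eval_app_le (iInf_le _ t) le_rfl) fun s => ?_
  refine eval_app_lam_le_of_le_aex (eval_app_le (iInf_le _ s) (eval_fst_le le_rfl)) fun u => ?_
  refine eval_exIntro_le u (eval_pair_le (eval_fst_le le_rfl) ?_)
  exact eval_app_le (eval_app_le (hg _ _ s) (eval_snd_le le_rfl)) (eval_snd_le le_rfl)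

theorem eval_eqTrans_le (l : List A) : IA.eval l eqTrans ≤
    ⨅ b, ⨅ a, ⨅ c, IA.imp (IA.eqW a b) (IA.imp (IA.eqW b c) (IA.eqW a c)) := by
  refine eval_fix_lam_le_iInf (r := fun x y : PreW A => x.rank < y.rank) Ordinal.lt_wf.onFun
    fun b g hg => le_iInf₂ fun a c => ?_
  have hg' : ∀ x y s,
      g ≤ IA.imp (IA.eqW x (b.fam s)) (IA.imp (IA.eqW (b.fam s) y) (IA.eqW x y)) :=
    fun x y s => (hg _ (b.rank_fam_lt s)).trans ((iInf_le _ x).trans (iInf_le _ y))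
  refine eval_lam_le_imp (eval_lam_le_imp ?_)
  rw [eqW_eq_times a c]
  refine eval_pair_le ?_ ?_
  · refine eval_app_le (eval_app_le (eval_app_le (eval_subTrans_le hg') le_rfl) ?_) ?_
    · exact eval_fst_le (eqW_eq_times a b).le
    · exact eval_fst_le (eqW_eq_times b c).le
  · refine eval_app_le (eval_app_le (eval_app_le (eval_subTrans_le hg') le_rfl) ?_) ?_
    · exact eval_snd_le (eqW_eq_times b c).le
    · exact eval_snd_le (eqW_eq_times a b).le

theorem eval_eqTrans_le_imp (l : List A) (a b c : PreW A) :
    IA.eval l eqTrans ≤ IA.imp (IA.eqW a b) (IA.imp (IA.eqW b c) (IA.eqW a c)) :=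
  (eval_eqTrans_le l).trans ((iInf_le _ b).trans ((iInf_le _ a).trans (iInf_le _ c)))

theorem eval_eqRefl_le (l : List A) : IA.eval l eqRefl ≤ ⨅ w, IA.eqW w w := by
  refine eval_fix_lam_le_iInf (r := fun x y : PreW A => x.rank < y.rank) Ordinal.lt_wf.onFun
    fun w g hg => ?_
  have hsub : IA.eval (g :: l) (lam (exIntro (pair (var 0) (var 1)))) ≤ IA.subW w w :=
    le_iInf fun t => eval_lam_le_imp
      (eval_exIntro_le t (eval_pair_le le_rfl (hg _ (w.rank_fam_lt t))))
  rw [eqW_eq_times]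
  exact eval_pair_le hsub hsub

variable {κ : Cardinal.{u}}

noncomputable def memIndPremise (IA : ImplicativeAlgebra A) (F : WSet A κ → A) : A :=
  ⨅ α : WSet A κ, IA.imp (⨅ β : WSet A κ, IA.imp (IA.memW β.1 α.1) (F β)) (F α)

theorem eval_memIndAux_le (l : List A) (F : WSet A κ → A) :
    IA.eval l memIndAux ≤ ⨅ α : WSet A κ,
      IA.imp (memIndPremise IA F) (⨅ β : WSet A κ, IA.imp (IA.eqW α.1 β.1) (F β)) := by
  refine eval_fix_lam_le_iInf (r := fun x y : WSet A κ => x.1.rank < y.1.rank)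
    Ordinal.lt_wf.onFun fun α g hg => eval_lam_le_imp (le_iInf fun β => eval_lam_le_imp ?_)
  refine eval_app_le (iInf_le _ β) (le_iInf fun γ => eval_lam_le_imp ?_)
  refine eval_app_lam_le_of_le_aex le_rfl fun s => ?_
  refine eval_app_lam_le_of_le_aex (eval_app_le ((eval_snd_le (eqW_eq_times _ _).le).trans
    (iInf_le _ s)) (eval_fst_le le_rfl)) fun t => ?_
  refine eval_app_le ((eval_app_le (hg (α.fam t) (α.1.rank_fam_lt t)) le_rfl).trans
    (iInf_le _ γ)) ?_
  exact eval_app_le (eval_app_le (eval_eqTrans_le_imp _ _ (β.1.fam s) _) (eval_snd_le le_rfl))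
    (eval_snd_le le_rfl)

theorem eval_memInd_le (l : List A) (F : WSet A κ → A) :
    IA.eval l memInd ≤ IA.imp (memIndPremise IA F) (⨅ α, F α) := by
  refine eval_lam_le_imp (le_iInf fun α => eval_app_le ?_
    ((eval_eqRefl_le _).trans (iInf_le _ α.1)))
  exact (eval_app_le ((eval_memIndAux_le _ F).trans (iInf_le _ α)) le_rfl).trans (iInf_le _ α)

variable (IA κ)

theorem interp_rename : ∀ {n m : ℕ} (φ : SetFormula n) (f : Fin n → Fin m)
    (v : Fin m → WSet A κ), IA.interp κ (φ.rename f) v = IA.interp κ φ (v ∘ f)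
  | _, _, .bot, _, _ | _, _, .mem _ _, _, _ | _, _, .eq _ _, _, _ => rfl
  | _, _, .and φ ψ, f, v | _, _, .or φ ψ, f, v | _, _, .imp φ ψ, f, v => by
    simp only [SetFormula.rename, interp, interp_rename φ f v, interp_rename ψ f v]
  | _, _, .ex φ, f, v | _, _, .all φ, f, v => by
    simp only [SetFormula.rename, interp, interp_rename φ, Fin.comp_snoc, ← Function.comp_assoc,
      Fin.snoc_comp_castSucc, Fin.snoc_last]

theorem le_interp_allClose : ∀ {n : ℕ} (φ : SetFormula n) {a : A},
    (∀ v, a ≤ IA.interp κ φ v) → a ≤ IA.interp κ φ.allClose (fun i => i.elim0)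
  | 0, _, _, h => h _
  | _ + 1, φ, _, h => le_interp_allClose (.all φ) fun v => le_iInf fun β => h (Fin.snoc v β)

end ImplicativeAlgebra

theorem stmt18_general {A : Type u} [CompleteLattice A] (IA : ImplicativeAlgebra A)
    (κ : Cardinal.{u}) (n : ℕ) (φ : SetFormula (n + 1)) :
    IA.interp κ
      (SetFormula.allClose
        ((SetFormula.all
          ((SetFormula.all ((SetFormula.mem (Fin.last (n + 1)) ((Fin.last n).castSucc)).imp
              (φ.rename (Fin.snoc (fun i => i.castSucc.castSucc) (Fin.last (n + 1)))))).imp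
            φ)).imp
         (SetFormula.all φ)))
      (fun i => i.elim0) ∈ IA.Sig := by
  refine IA.Sig_upward (ImplicativeAlgebra.eval_mem (l := []) (by simp) SKTerm.memInd)
    (IA.le_interp_allClose κ _ fun v => ?_)
  have hv : ∀ α β : WSet A κ, (Fin.snoc (Fin.snoc v α) β ∘ fun i => i.castSucc.castSucc) = v :=
    fun _ _ => funext fun _ => by simp
  simpa [ImplicativeAlgebra.interp, ImplicativeAlgebra.interp_rename,
    ImplicativeAlgebra.memIndPremise, Fin.comp_snoc, hv]
    using ImplicativeAlgebra.eval_memInd_le (IA := IA) []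
      fun α => IA.interp κ φ (Fin.snoc v α)

theorem stmt18 {A : Type u} [CompleteLattice A] (IA : ImplicativeAlgebra A)
    (κ : Cardinal.{u}) (hκ : κ.IsInaccessible) (hA : Cardinal.mk A < κ) (n : ℕ) (φ : SetFormula (n + 1)) :
    IA.interp κ
      (SetFormula.allClose
        ((SetFormula.all
          ((SetFormula.all ((SetFormula.mem (Fin.last (n + 1)) ((Fin.last n).castSucc)).imp
              (φ.rename (Fin.snoc (fun i => i.castSucc.castSucc) (Fin.last (n + 1)))))).imp
            φ)).imp
         (SetFormula.all φ)))
      (fun i => i.elim0) ∈ IA.Sig :=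
  stmt18_general IA κ n φ
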